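/- arXiv:1510.08712 — 11 statements merged into one kernel-verified Lean document; each statement's English description precedes it below -/
import Mathlib

section
/- Let m₁, m₂, m₃, f, φ : ℝ → ℝ with m₁, m₂, m₃ differentiable, satisfying the geodesic Darboux system m₁' = m₃ − f, m₂' = φ·m₃, m₃' = −m₁ − φ·m₂ on all of ℝ. If the function m₁² + m₂² + m₃² is constant, then m₁(θ)·f(θ) = 0 for all θ ∈ ℝ. -/
/-! Along the geodesic Darboux system the torsion terms `± φ m₂ m₃` and the terms `± m₁ m₃`
cancel in the derivative of `m₁² + m₂² + m₃²`, leaving `-2 m₁ f`; a constant breadth therefore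
forces `m₁ f = 0`. -/

theorem hasDerivAt_darboux_sum_sq {m₁ m₂ m₃ : ℝ → ℝ} {f φ θ : ℝ}
    (h1 : HasDerivAt m₁ (m₃ θ - f) θ) (h2 : HasDerivAt m₂ (φ * m₃ θ) θ)
    (h3 : HasDerivAt m₃ (-m₁ θ - φ * m₂ θ) θ) :
    HasDerivAt (fun t => m₁ t ^ 2 + m₂ t ^ 2 + m₃ t ^ 2) (-2 * (m₁ θ * f)) θ := by
  refine (((h1.fun_pow 2).add (h2.fun_pow 2)).add (h3.fun_pow 2)).congr_deriv ?_
  push_cast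
  ring

/-- Geodesic case: if the coefficients satisfy the geodesic Darboux system and
`m₁² + m₂² + m₃²` is constant, then `m₁ · f ≡ 0`. -/
theorem geodesic_constant_breadth_m1_mul_f_eq_zero
    (m₁ m₂ m₃ f φ : ℝ → ℝ)
    (hm₁ : Differentiable ℝ m₁) (hm₂ : Differentiable ℝ m₂)
    (hm₃ : Differentiable ℝ m₃)
    (h1 : ∀ θ, deriv m₁ θ = m₃ θ - f θ)
    (h2 : ∀ θ, deriv m₂ θ = φ θ * m₃ θ)
    (h3 : ∀ θ, deriv m₃ θ = -m₁ θ - φ θ * m₂ θ)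
    (hconst : ∃ C : ℝ, ∀ θ, (m₁ θ) ^ 2 + (m₂ θ) ^ 2 + (m₃ θ) ^ 2 = C) :
    ∀ θ, m₁ θ * f θ = 0 := by
  obtain ⟨C, hC⟩ := hconst
  intro θ
  have hderiv := hasDerivAt_darboux_sum_sq (f := f θ) (φ := φ θ)
    (h1 θ ▸ (hm₁ θ).hasDerivAt) (h2 θ ▸ (hm₂ θ).hasDerivAt) (h3 θ ▸ (hm₃ θ).hasDerivAt)
  rw [show (fun t => m₁ t ^ 2 + m₂ t ^ 2 + m₃ t ^ 2) = fun _ => C from funext hC] at hderiv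
  linarith [hderiv.unique (hasDerivAt_const θ C)]
end

section
/- Let m₁, m₂, m₃, f, φ : ℝ → ℝ satisfy the geodesic Darboux system m₁' = m₃ − f, m₂' = φ·m₃, m₃' = −m₁ − φ·m₂ on ℝ, where m₁, m₂, m₃ are differentiable, f is twice differentiable, and φ is differentiable with φ(θ) ≠ 0 for all θ. Then m₁ is three times differentiable and satisfies the third-order equation (m₁''' + f'') − (φ'/φ)·(m₁'' + m₁ + f') + (1 + φ²)·m₁' + φ²·f = 0 on ℝ. -/
/-!
Differentiating `m₁' = m₃ - f` once and using `m₃' = -m₁ - φ m₂` gives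
`m₁'' + m₁ + f' = -φ m₂`. Differentiating again and using `m₂' = φ m₃` gives
`m₁''' + m₁' + f'' = -φ' m₂ - φ² m₃`; since `φ ≠ 0`, the term `-φ' m₂` equals
`(φ'/φ)(m₁'' + m₁ + f')` by the first identity, and `m₃ = m₁' + f` eliminates `m₃`.
-/

section GeodesicDarbouxSystem

variable {m₁ m₂ m₃ f φ : ℝ → ℝ}

theorem hasDerivAt_deriv_of_darboux (hm₃ : Differentiable ℝ m₃) (hf : Differentiable ℝ f)
    (h1 : ∀ θ, deriv m₁ θ = m₃ θ - f θ) (h3 : ∀ θ, deriv m₃ θ = -m₁ θ - φ θ * m₂ θ) (θ : ℝ) :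
    HasDerivAt (deriv m₁) (-m₁ θ - φ θ * m₂ θ - deriv f θ) θ := by
  rw [funext h1, ← h3]
  exact (hm₃ θ).hasDerivAt.sub (hf θ).hasDerivAt

theorem hasDerivAt_deriv_deriv_of_darboux (hm₁ : Differentiable ℝ m₁)
    (hm₂ : Differentiable ℝ m₂) (hm₃ : Differentiable ℝ m₃) (hf : Differentiable ℝ f)
    (hf' : Differentiable ℝ (deriv f)) (hφ : Differentiable ℝ φ)
    (h1 : ∀ θ, deriv m₁ θ = m₃ θ - f θ) (h3 : ∀ θ, deriv m₃ θ = -m₁ θ - φ θ * m₂ θ) (θ : ℝ) :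
    HasDerivAt (deriv (deriv m₁))
      (-deriv m₁ θ - (deriv φ θ * m₂ θ + φ θ * deriv m₂ θ) - deriv (deriv f) θ) θ := by
  rw [funext fun θ => (hasDerivAt_deriv_of_darboux hm₃ hf h1 h3 θ).deriv]
  exact ((hm₁ θ).hasDerivAt.neg.sub ((hφ θ).hasDerivAt.mul (hm₂ θ).hasDerivAt)).sub
    (hf' θ).hasDerivAt

end GeodesicDarbouxSystem

/-- Geodesic case: the coefficients of the geodesic Darboux system give a
third-order ODE for `m₁` (paper's equation (9)). -/
theorem geodesic_third_order_ode
    (m₁ m₂ m₃ f φ : ℝ → ℝ)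
    (hm₁ : Differentiable ℝ m₁) (hm₂ : Differentiable ℝ m₂)
    (hm₃ : Differentiable ℝ m₃)
    (hf : Differentiable ℝ f) (hf' : Differentiable ℝ (deriv f))
    (hφ : Differentiable ℝ φ) (hφ0 : ∀ θ, φ θ ≠ 0)
    (h1 : ∀ θ, deriv m₁ θ = m₃ θ - f θ)
    (h2 : ∀ θ, deriv m₂ θ = φ θ * m₃ θ)
    (h3 : ∀ θ, deriv m₃ θ = -m₁ θ - φ θ * m₂ θ) :
    Differentiable ℝ (deriv m₁) ∧ Differentiable ℝ (deriv (deriv m₁)) ∧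
      ∀ θ, (deriv (deriv (deriv m₁)) θ + deriv (deriv f) θ)
          - (deriv φ θ / φ θ) * (deriv (deriv m₁) θ + m₁ θ + deriv f θ)
          + (1 + (φ θ) ^ 2) * deriv m₁ θ + (φ θ) ^ 2 * f θ = 0 := by
  have second := hasDerivAt_deriv_of_darboux hm₃ hf h1 h3
  have third := hasDerivAt_deriv_deriv_of_darboux hm₁ hm₂ hm₃ hf hf' hφ h1 h3
  refine ⟨fun θ => (second θ).differentiableAt, fun θ => (third θ).differentiableAt, fun θ => ?_⟩
  have key : deriv (deriv m₁) θ + m₁ θ + deriv f θ = -(φ θ * m₂ θ) := by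
    rw [(second θ).deriv]
    ring
  have cancel : deriv φ θ / φ θ * (φ θ * m₂ θ) = deriv φ θ * m₂ θ := by
    rw [← mul_assoc, div_mul_cancel₀ _ (hφ0 θ)]
  rw [key, mul_neg, cancel, (third θ).deriv, h2, h1]
  ring
end

section
/- Let φ₀ ≠ 0 be a real constant and let c₁, c₂ be real constants. Define f(θ) = c₁·cos(φ₀·θ) + c₂·sin(φ₀·θ), m₁ ≡ 0, m₃(θ) = f(θ), and m₂(θ) = −m₃'(θ)/φ₀. Then (m₁, m₂, m₃) satisfies the geodesic Darboux system m₁' = m₃ − f, m₂' = φ₀·m₃, m₃' = −m₁ − φ₀·m₂ on ℝ, and the function m₁² + m₂² + m₃² is constant on ℝ (equal to c₁² + c₂²). -/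
/-! With `m₃ = c₁ cos(φ₀θ) + c₂ sin(φ₀θ)`, the definition of `m₂` makes it the quadrature
partner `c₁ sin(φ₀θ) - c₂ cos(φ₀θ)`, so `(m₂, m₃)` rotates with angular speed `φ₀` and
`m₂² + m₃²` stays equal to `c₁² + c₂²`. -/

open Real

noncomputable def sinusoid (ω a b t : ℝ) : ℝ := a * cos (ω * t) + b * sin (ω * t)

theorem hasDerivAt_sinusoid (ω a b t : ℝ) :
    HasDerivAt (sinusoid ω a b) (ω * sinusoid ω b (-a) t) t := by
  have hlin : HasDerivAt (fun s => ω * s) ω t := by simpa using (hasDerivAt_id t).const_mul ω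
  refine ((hlin.cos.const_mul a).add (hlin.sin.const_mul b)).congr_deriv ?_
  simp only [sinusoid]
  ring

theorem deriv_sinusoid (ω a b : ℝ) : deriv (sinusoid ω a b) = fun t => ω * sinusoid ω b (-a) t :=
  funext fun t => (hasDerivAt_sinusoid ω a b t).deriv

theorem neg_sinusoid (ω a b t : ℝ) : -sinusoid ω a b t = sinusoid ω (-a) (-b) t := by
  simp only [sinusoid]
  ring

theorem sinusoid_sq_add_sq (ω a b t : ℝ) :
    sinusoid ω (-b) a t ^ 2 + sinusoid ω a b t ^ 2 = a ^ 2 + b ^ 2 := by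
  simp only [sinusoid]
  linear_combination (a ^ 2 + b ^ 2) * cos_sq_add_sin_sq (ω * t)

/-- Theorem 1 (ii) of the paper: the displayed coefficients solve the geodesic
Darboux system with `m₁ ≡ 0` and give constant breadth `c₁² + c₂²`. -/
theorem geodesic_case_ii_solution
    (φ₀ : ℝ) (hφ₀ : φ₀ ≠ 0) (c₁ c₂ : ℝ)
    (f m₁ m₂ m₃ : ℝ → ℝ)
    (hf : ∀ θ, f θ = c₁ * Real.cos (φ₀ * θ) + c₂ * Real.sin (φ₀ * θ))
    (hm₁ : ∀ θ, m₁ θ = 0)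
    (hm₃ : ∀ θ, m₃ θ = f θ)
    (hm₂ : ∀ θ, m₂ θ = -(deriv m₃ θ) / φ₀) :
    (∀ θ, deriv m₁ θ = m₃ θ - f θ) ∧
    (∀ θ, deriv m₂ θ = φ₀ * m₃ θ) ∧
    (∀ θ, deriv m₃ θ = -m₁ θ - φ₀ * m₂ θ) ∧
    (∀ θ, (m₁ θ) ^ 2 + (m₂ θ) ^ 2 + (m₃ θ) ^ 2 = c₁ ^ 2 + c₂ ^ 2) := by
  have hm₁_eq : m₁ = fun _ => 0 := funext hm₁
  have hm₃_eq : m₃ = sinusoid φ₀ c₁ c₂ := funext fun θ => (hm₃ θ).trans (hf θ)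
  have hm₂_eq : m₂ = sinusoid φ₀ (-c₂) c₁ := funext fun θ => by
    rw [hm₂, hm₃_eq, deriv_sinusoid, neg_mul_eq_mul_neg, mul_div_cancel_left₀ _ hφ₀,
      neg_sinusoid, neg_neg]
  refine ⟨fun θ => ?_, fun θ => ?_, fun θ => ?_, fun θ => ?_⟩
  · rw [hm₁_eq, deriv_const, hm₃, sub_self]
  · rw [hm₂_eq, deriv_sinusoid, neg_neg, hm₃_eq]
  · rw [hm₃_eq, deriv_sinusoid, hm₁, hm₂_eq]
    simp only [sinusoid]
    ring
  · rw [hm₁, hm₂_eq, hm₃_eq, sq, zero_mul, zero_add, sinusoid_sq_add_sq]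
end

section
/- Let ε ∈ {1, −1} and let m₁, m₂, m₃, f, φ : ℝ → ℝ satisfy the asymptotic Darboux system m₁' = ε·m₂ − f, m₂' = φ·m₃ − ε·m₁, m₃' = −φ·m₂ on ℝ, where m₁, m₂, m₃ are differentiable, f is twice differentiable, and φ is differentiable with φ(θ) ≠ 0 for all θ. Then m₁ is three times differentiable and satisfies the third-order equation (m₁''' + f'') − (φ'/φ)·(m₁'' + m₁ + f') + (1 + φ²)·m₁' + φ²·f = 0 on ℝ. -/
/-!
Since `ε² = 1`, differentiating the first equation and substituting the second gives
`m₁'' + m₁ + f' = ε φ m₃`. Differentiating once more and substituting the third equation gives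
`m₁''' + f'' = ε φ' m₃ - ε φ² m₂ - m₁'`; there `ε φ' m₃ = (φ'/φ)(m₁'' + m₁ + f')` and
`ε m₂ = m₁' + f` eliminate `m₂` and `m₃`.
-/

structure IsAsymptoticDarbouxSystem (ε : ℝ) (m₁ m₂ m₃ f φ : ℝ → ℝ) : Prop where
  deriv_m₁ : ∀ θ, deriv m₁ θ = ε * m₂ θ - f θ
  deriv_m₂ : ∀ θ, deriv m₂ θ = φ θ * m₃ θ - ε * m₁ θ
  deriv_m₃ : ∀ θ, deriv m₃ θ = -(φ θ) * m₂ θ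

namespace IsAsymptoticDarbouxSystem

variable {ε : ℝ} {m₁ m₂ m₃ f φ : ℝ → ℝ}

theorem differentiable_deriv_m₁ (hS : IsAsymptoticDarbouxSystem ε m₁ m₂ m₃ f φ)
    (hm₂ : Differentiable ℝ m₂) (hf : Differentiable ℝ f) : Differentiable ℝ (deriv m₁) := by
  rw [funext hS.deriv_m₁]
  exact (hm₂.const_mul ε).sub hf

theorem deriv_deriv_m₁ (hS : IsAsymptoticDarbouxSystem ε m₁ m₂ m₃ f φ) (hε : ε ^ 2 = 1)
    (hm₂ : Differentiable ℝ m₂) (hf : Differentiable ℝ f) :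
    deriv (deriv m₁) = fun θ ↦ ε * φ θ * m₃ θ - m₁ θ - deriv f θ := by
  funext θ
  rw [funext hS.deriv_m₁, deriv_fun_sub ((hm₂ θ).const_mul ε) (hf θ),
    deriv_const_mul ε (hm₂ θ), hS.deriv_m₂]
  linear_combination (-m₁ θ) * hε

theorem hasDerivAt_deriv_deriv_m₁ (hS : IsAsymptoticDarbouxSystem ε m₁ m₂ m₃ f φ)
    (hε : ε ^ 2 = 1) (hm₁ : Differentiable ℝ m₁) (hm₂ : Differentiable ℝ m₂)
    (hm₃ : Differentiable ℝ m₃) (hf : Differentiable ℝ f) (hf' : Differentiable ℝ (deriv f))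
    (hφ : Differentiable ℝ φ) (θ : ℝ) :
    HasDerivAt (deriv (deriv m₁))
      (ε * deriv φ θ * m₃ θ - ε * φ θ ^ 2 * m₂ θ - deriv m₁ θ - deriv (deriv f) θ) θ := by
  rw [hS.deriv_deriv_m₁ hε hm₂ hf]
  refine ((((hφ θ).hasDerivAt.const_mul ε).mul (hm₃ θ).hasDerivAt).sub
    (hm₁ θ).hasDerivAt).sub (hf' θ).hasDerivAt |>.congr_deriv ?_
  rw [hS.deriv_m₃]
  ring

end IsAsymptoticDarbouxSystem

/-- Asymptotic case: the coefficients of the asymptotic Darboux system give a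
third-order ODE for `m₁` (paper's equation (14)). -/
theorem asymptotic_third_order_ode
    (ε : ℝ) (hε : ε = 1 ∨ ε = -1)
    (m₁ m₂ m₃ f φ : ℝ → ℝ)
    (hm₁ : Differentiable ℝ m₁) (hm₂ : Differentiable ℝ m₂)
    (hm₃ : Differentiable ℝ m₃)
    (hf : Differentiable ℝ f) (hf' : Differentiable ℝ (deriv f))
    (hφ : Differentiable ℝ φ) (hφ0 : ∀ θ, φ θ ≠ 0)
    (h1 : ∀ θ, deriv m₁ θ = ε * m₂ θ - f θ)
    (h2 : ∀ θ, deriv m₂ θ = φ θ * m₃ θ - ε * m₁ θ)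
    (h3 : ∀ θ, deriv m₃ θ = -(φ θ) * m₂ θ) :
    Differentiable ℝ (deriv m₁) ∧ Differentiable ℝ (deriv (deriv m₁)) ∧
      ∀ θ, (deriv (deriv (deriv m₁)) θ + deriv (deriv f) θ)
          - (deriv φ θ / φ θ) * (deriv (deriv m₁) θ + m₁ θ + deriv f θ)
          + (1 + (φ θ) ^ 2) * deriv m₁ θ + (φ θ) ^ 2 * f θ = 0 := by
  have hS : IsAsymptoticDarbouxSystem ε m₁ m₂ m₃ f φ := ⟨h1, h2, h3⟩
  have hε2 : ε ^ 2 = 1 := by rcases hε with rfl | rfl <;> norm_num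
  have h₃ := hS.hasDerivAt_deriv_deriv_m₁ hε2 hm₁ hm₂ hm₃ hf hf' hφ
  refine ⟨hS.differentiable_deriv_m₁ hm₂ hf, fun θ ↦ (h₃ θ).differentiableAt, fun θ ↦ ?_⟩
  rw [(h₃ θ).deriv, hS.deriv_deriv_m₁ hε2 hm₂ hf, h1]
  field_simp [hφ0 θ]
  ring
end

section
/- Let ε ∈ {1, −1}, let φ₀ ≠ 0 be a real constant, set ω = √(1 + φ₀²), and let c₁, c₂ be real constants. Define m₁(θ) = c₁·sin(ω·θ) − c₂·cos(ω·θ), m₂(θ) = ε·m₁'(θ), and m₃(θ) = ε·(m₁(θ) + m₁''(θ))/φ₀. Then (m₁, m₂, m₃) satisfies the asymptotic Darboux system m₁' = ε·m₂, m₂' = φ₀·m₃ − ε·m₁, m₃' = −φ₀·m₂ on ℝ (i.e., the system with f ≡ 0), and the function m₁² + m₂² + m₃² is constant on ℝ. -/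
/-!
The first coefficient is a harmonic oscillator of frequency `ω`, so `m₁'' = -(1 + φ₀²) m₁`.
Hence `m₃ = -ε φ₀ m₁`, the three equations reduce to `ε² = 1` and this oscillator equation,
and `m₁² + m₂² + m₃² = (1 + φ₀²) m₁² + m₁'²` is the conserved energy of the oscillator.
-/

open Real

noncomputable def trigComb (a b ω θ : ℝ) : ℝ := a * sin (ω * θ) - b * cos (ω * θ)

theorem hasDerivAt_trigComb (a b ω θ : ℝ) :
    HasDerivAt (trigComb a b ω) (ω * trigComb b (-a) ω θ) θ := by
  have hlin : HasDerivAt (fun θ : ℝ => ω * θ) ω θ := by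
    simpa using (hasDerivAt_id θ).const_mul ω
  refine ((((hasDerivAt_sin (ω * θ)).comp θ hlin).const_mul a).sub
    (((hasDerivAt_cos (ω * θ)).comp θ hlin).const_mul b)).congr_deriv ?_
  simp only [trigComb]
  ring

theorem differentiable_trigComb (a b ω : ℝ) : Differentiable ℝ (trigComb a b ω) :=
  fun θ => (hasDerivAt_trigComb a b ω θ).differentiableAt

theorem deriv_trigComb (a b ω : ℝ) :
    deriv (trigComb a b ω) = fun θ => ω * trigComb b (-a) ω θ :=
  funext fun θ => (hasDerivAt_trigComb a b ω θ).deriv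

theorem deriv_deriv_trigComb (a b ω θ : ℝ) :
    deriv (deriv (trigComb a b ω)) θ = -ω ^ 2 * trigComb a b ω θ := by
  rw [deriv_trigComb, ((hasDerivAt_trigComb b (-a) ω θ).const_mul ω).deriv]
  simp only [trigComb]
  ring

theorem exists_energy_eq_const_of_deriv_deriv_eq {f : ℝ → ℝ} {k : ℝ} (hf : Differentiable ℝ f)
    (hf' : Differentiable ℝ (deriv f)) (hk : ∀ θ, deriv (deriv f) θ = -k * f θ) :
    ∃ C, ∀ θ, k * f θ ^ 2 + deriv f θ ^ 2 = C := by
  have henergy : Differentiable ℝ fun θ => k * f θ ^ 2 + deriv f θ ^ 2 :=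
    ((hf.pow 2).const_mul k).add (hf'.pow 2)
  have hzero : ∀ θ, deriv (fun θ => k * f θ ^ 2 + deriv f θ ^ 2) θ = 0 := by
    intro θ
    have h : HasDerivAt (fun θ => k * f θ ^ 2 + deriv f θ ^ 2)
        (k * (2 * f θ * deriv f θ) + 2 * deriv f θ * deriv (deriv f) θ) θ := by
      refine ((((hf θ).hasDerivAt.pow 2).const_mul k).add
        ((hf' θ).hasDerivAt.pow 2)).congr_deriv ?_
      ring
    rw [h.deriv, hk θ]
    ring
  exact ⟨_, fun θ => is_const_of_deriv_eq_zero henergy hzero θ 0⟩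

theorem darbouxSystem_of_deriv_deriv_eq {ε φ₀ : ℝ} (hε : ε ^ 2 = 1) (hφ₀ : φ₀ ≠ 0)
    {m₁ m₂ m₃ : ℝ → ℝ} (h₁ : Differentiable ℝ m₁) (h₁' : Differentiable ℝ (deriv m₁))
    (hosc : ∀ θ, deriv (deriv m₁) θ = -(1 + φ₀ ^ 2) * m₁ θ)
    (hm₂ : ∀ θ, m₂ θ = ε * deriv m₁ θ)
    (hm₃ : ∀ θ, m₃ θ = ε * (m₁ θ + deriv (deriv m₁) θ) / φ₀) :
    (∀ θ, deriv m₁ θ = ε * m₂ θ) ∧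
    (∀ θ, deriv m₂ θ = φ₀ * m₃ θ - ε * m₁ θ) ∧
    (∀ θ, deriv m₃ θ = -φ₀ * m₂ θ) ∧
    (∃ C : ℝ, ∀ θ, (m₁ θ) ^ 2 + (m₂ θ) ^ 2 + (m₃ θ) ^ 2 = C) := by
  have hm₃' : m₃ = fun θ => -ε * φ₀ * m₁ θ := by
    funext θ
    rw [hm₃ θ, hosc θ]
    field_simp
    ring
  have hm₂' : m₂ = fun θ => ε * deriv m₁ θ := funext hm₂
  subst hm₂' hm₃'
  obtain ⟨C, hC⟩ := exists_energy_eq_const_of_deriv_deriv_eq h₁ h₁' hosc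
  refine ⟨fun θ => ?_, fun θ => ?_, fun θ => ?_, ⟨C, fun θ => ?_⟩⟩
  · linear_combination -deriv m₁ θ * hε
  · rw [deriv_const_mul _ (h₁' θ), hosc θ]
    ring
  · rw [deriv_const_mul _ (h₁ θ)]
    ring
  · linear_combination (deriv m₁ θ ^ 2 + φ₀ ^ 2 * m₁ θ ^ 2) * hε + hC θ

/-- Theorem 2 (i) of the paper: the displayed coefficients solve the asymptotic
Darboux system with `f ≡ 0` and give constant breadth. -/
theorem asymptotic_case_i_solution
    (ε : ℝ) (hε : ε = 1 ∨ ε = -1)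
    (φ₀ : ℝ) (hφ₀ : φ₀ ≠ 0) (c₁ c₂ : ℝ) (ω : ℝ)
    (hω : ω = Real.sqrt (1 + φ₀ ^ 2))
    (m₁ m₂ m₃ : ℝ → ℝ)
    (hm₁ : ∀ θ, m₁ θ = c₁ * Real.sin (ω * θ) - c₂ * Real.cos (ω * θ))
    (hm₂ : ∀ θ, m₂ θ = ε * deriv m₁ θ)
    (hm₃ : ∀ θ, m₃ θ = ε * (m₁ θ + deriv (deriv m₁) θ) / φ₀) :
    (∀ θ, deriv m₁ θ = ε * m₂ θ) ∧
    (∀ θ, deriv m₂ θ = φ₀ * m₃ θ - ε * m₁ θ) ∧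
    (∀ θ, deriv m₃ θ = -φ₀ * m₂ θ) ∧
    (∃ C : ℝ, ∀ θ, (m₁ θ) ^ 2 + (m₂ θ) ^ 2 + (m₃ θ) ^ 2 = C) := by
  have hm₁' : m₁ = trigComb c₁ c₂ ω := funext hm₁
  subst hm₁'
  have hε2 : ε ^ 2 = 1 := by rcases hε with rfl | rfl <;> norm_num
  have hω2 : ω ^ 2 = 1 + φ₀ ^ 2 := by rw [hω, sq_sqrt (by positivity)]
  have h₁' : Differentiable ℝ (deriv (trigComb c₁ c₂ ω)) := by
    rw [deriv_trigComb]
    exact (differentiable_trigComb c₂ (-c₁) ω).const_mul ω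
  refine darbouxSystem_of_deriv_deriv_eq hε2 hφ₀ (differentiable_trigComb c₁ c₂ ω) h₁'
    (fun θ => ?_) hm₂ hm₃
  rw [deriv_deriv_trigComb, hω2]
end

section
/- Let ε ∈ {1, −1}, let φ₀ ≠ 0 be a real constant, and let c₁, c₂ be real constants. Define f(θ) = c₁·cos(φ₀·θ) + c₂·sin(φ₀·θ), m₁ ≡ 0, m₂(θ) = ε·f(θ), and m₃(θ) = m₂'(θ)/φ₀. Then (m₁, m₂, m₃) satisfies the asymptotic Darboux system m₁' = ε·m₂ − f, m₂' = φ₀·m₃ − ε·m₁, m₃' = −φ₀·m₂ on ℝ, and the function m₁² + m₂² + m₃² is constant on ℝ (equal to c₁² + c₂²). -/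
/-- Theorem 2 (ii) of the paper: the displayed coefficients solve the asymptotic
Darboux system with `m₁ ≡ 0` and give constant breadth `c₁² + c₂²`. -/
theorem asymptotic_case_ii_solution
    (ε : ℝ) (hε : ε = 1 ∨ ε = -1)
    (φ₀ : ℝ) (hφ₀ : φ₀ ≠ 0) (c₁ c₂ : ℝ)
    (f m₁ m₂ m₃ : ℝ → ℝ)
    (hf : ∀ θ, f θ = c₁ * Real.cos (φ₀ * θ) + c₂ * Real.sin (φ₀ * θ))
    (hm₁ : ∀ θ, m₁ θ = 0)
    (hm₂ : ∀ θ, m₂ θ = ε * f θ)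
    (hm₃ : ∀ θ, m₃ θ = deriv m₂ θ / φ₀) :
    (∀ θ, deriv m₁ θ = ε * m₂ θ - f θ) ∧
    (∀ θ, deriv m₂ θ = φ₀ * m₃ θ - ε * m₁ θ) ∧
    (∀ θ, deriv m₃ θ = -φ₀ * m₂ θ) ∧
    (∀ θ, (m₁ θ) ^ 2 + (m₂ θ) ^ 2 + (m₃ θ) ^ 2 = c₁ ^ 2 + c₂ ^ 2) := by
  have hε2 : ε * ε = 1 := by rcases hε with h | h <;> simp [h]
  -- derivative of the inner linear map
  have hlin : ∀ θ : ℝ, HasDerivAt (fun x : ℝ => φ₀ * x) φ₀ θ := by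
    intro θ
    simpa using (hasDerivAt_id θ).const_mul φ₀
  have hd₂ : ∀ θ, HasDerivAt m₂
      (ε * (c₂ * φ₀ * Real.cos (φ₀ * θ) - c₁ * φ₀ * Real.sin (φ₀ * θ))) θ := by
    intro θ
    have hcos : HasDerivAt (fun x : ℝ => Real.cos (φ₀ * x))
        (-Real.sin (φ₀ * θ) * φ₀) θ :=
      (Real.hasDerivAt_cos (φ₀ * θ)).comp θ (hlin θ)
    have hsin : HasDerivAt (fun x : ℝ => Real.sin (φ₀ * x))
        (Real.cos (φ₀ * θ) * φ₀) θ :=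
      (Real.hasDerivAt_sin (φ₀ * θ)).comp θ (hlin θ)
    have h : HasDerivAt
        (fun x : ℝ => ε * (c₁ * Real.cos (φ₀ * x) + c₂ * Real.sin (φ₀ * x)))
        (ε * (c₁ * (-Real.sin (φ₀ * θ) * φ₀) + c₂ * (Real.cos (φ₀ * θ) * φ₀))) θ :=
      (((hcos.const_mul c₁).add (hsin.const_mul c₂)).const_mul ε)
    have heq : m₂ = fun x : ℝ => ε * (c₁ * Real.cos (φ₀ * x) + c₂ * Real.sin (φ₀ * x)) := by
      funext x; rw [hm₂, hf]
    rw [heq]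
    convert h using 1
    ring
  have hderiv₂ : ∀ θ, deriv m₂ θ
      = ε * (c₂ * φ₀ * Real.cos (φ₀ * θ) - c₁ * φ₀ * Real.sin (φ₀ * θ)) := fun θ =>
    (hd₂ θ).deriv
  have hm₃' : ∀ θ, m₃ θ = ε * (c₂ * Real.cos (φ₀ * θ) - c₁ * Real.sin (φ₀ * θ)) := by
    intro θ
    rw [hm₃, hderiv₂]
    field_simp
  have hd₃ : ∀ θ, HasDerivAt m₃
      (ε * (-(c₂ * φ₀ * Real.sin (φ₀ * θ)) - c₁ * φ₀ * Real.cos (φ₀ * θ))) θ := by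
    intro θ
    have hcos : HasDerivAt (fun x : ℝ => Real.cos (φ₀ * x))
        (-Real.sin (φ₀ * θ) * φ₀) θ :=
      (Real.hasDerivAt_cos (φ₀ * θ)).comp θ (hlin θ)
    have hsin : HasDerivAt (fun x : ℝ => Real.sin (φ₀ * x))
        (Real.cos (φ₀ * θ) * φ₀) θ :=
      (Real.hasDerivAt_sin (φ₀ * θ)).comp θ (hlin θ)
    have h : HasDerivAt
        (fun x : ℝ => ε * (c₂ * Real.cos (φ₀ * x) - c₁ * Real.sin (φ₀ * x)))
        (ε * (c₂ * (-Real.sin (φ₀ * θ) * φ₀) - c₁ * (Real.cos (φ₀ * θ) * φ₀))) θ :=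
      (((hcos.const_mul c₂).sub (hsin.const_mul c₁)).const_mul ε)
    have heq : m₃ = fun x : ℝ => ε * (c₂ * Real.cos (φ₀ * x) - c₁ * Real.sin (φ₀ * x)) := by
      funext x; exact hm₃' x
    rw [heq]
    convert h using 1
    ring
  refine ⟨?_, ?_, ?_, ?_⟩
  · intro θ
    have : m₁ = fun _ : ℝ => (0 : ℝ) := funext hm₁
    rw [this, deriv_const, hm₂, hf]
    linear_combination (-(c₁ * Real.cos (φ₀ * θ) + c₂ * Real.sin (φ₀ * θ))) * hε2
  · intro θ
    rw [hderiv₂, hm₃', hm₁]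
    ring
  · intro θ
    rw [(hd₃ θ).deriv, hm₂, hf]
    ring
  · intro θ
    rw [hm₁, hm₂, hm₃', hf]
    have h := Real.sin_sq_add_cos_sq (φ₀ * θ)
    rcases hε with h1 | h1 <;> subst h1 <;>
      linear_combination (c₁ ^ 2 + c₂ ^ 2) * h
end

section
/- Let m₁, m₂, m₃, f, α : ℝ → ℝ satisfy the principal-line Darboux system m₁' = m₂·cos α + m₃·sin α − f, m₂' = −m₁·cos α, m₃' = −m₁·sin α on ℝ, where m₁, m₂, m₃ are differentiable, f is twice differentiable, and α is twice differentiable. Then m₁ is three times differentiable and satisfies m₁''' + m₁' + f'' + (α')²·(m₁' + f) − α''·(m₃·cos α − m₂·sin α) = 0 on ℝ. -/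
/-!
Rotate the pair `(m₂, m₃)` by the angle `α`: put `v = m₂ cos α + m₃ sin α` and
`u = m₃ cos α - m₂ sin α`. The system says `m₁' = v - f`, and since
`(m₂', m₃') = -m₁ (cos α, sin α)` one gets `v' = -m₁ + α' u` and `u' = -α' v`.
Hence `m₁'' = -m₁ + α' u - f'` and `m₁''' = -m₁' + α'' u - α'² v - f''`;
substituting `v = m₁' + f` gives the equation.
-/

open Real

section Rotation

variable {a b α : ℝ → ℝ} {a' b' α' x : ℝ}

theorem hasDerivAt_mul_cos_add_mul_sin (ha : HasDerivAt a a' x) (hb : HasDerivAt b b' x)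
    (hα : HasDerivAt α α' x) :
    HasDerivAt (fun θ => a θ * cos (α θ) + b θ * sin (α θ))
      (a' * cos (α x) + b' * sin (α x) + α' * (b x * cos (α x) - a x * sin (α x))) x := by
  refine ((ha.mul hα.cos).add (hb.mul hα.sin)).congr_deriv ?_
  ring

theorem hasDerivAt_mul_cos_sub_mul_sin (ha : HasDerivAt a a' x) (hb : HasDerivAt b b' x)
    (hα : HasDerivAt α α' x) :
    HasDerivAt (fun θ => b θ * cos (α θ) - a θ * sin (α θ))
      (b' * cos (α x) - a' * sin (α x) - α' * (a x * cos (α x) + b x * sin (α x))) x := by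
  refine ((hb.mul hα.cos).sub (ha.mul hα.sin)).congr_deriv ?_
  ring

end Rotation

section PrincipalDarboux

variable {m₁ m₂ m₃ f α : ℝ → ℝ}

theorem hasDerivAt_mul_cos_add_mul_sin_of_principal (hm₂ : Differentiable ℝ m₂)
    (hm₃ : Differentiable ℝ m₃) (hα : Differentiable ℝ α)
    (h2 : ∀ θ, deriv m₂ θ = -(m₁ θ) * cos (α θ))
    (h3 : ∀ θ, deriv m₃ θ = -(m₁ θ) * sin (α θ)) (x : ℝ) :
    HasDerivAt (fun θ => m₂ θ * cos (α θ) + m₃ θ * sin (α θ))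
      (-m₁ x + deriv α x * (m₃ x * cos (α x) - m₂ x * sin (α x))) x := by
  refine (hasDerivAt_mul_cos_add_mul_sin (hm₂ x).hasDerivAt
    (hm₃ x).hasDerivAt (hα x).hasDerivAt).congr_deriv ?_
  rw [h2, h3]
  linear_combination -m₁ x * sin_sq_add_cos_sq (α x)

theorem hasDerivAt_mul_cos_sub_mul_sin_of_principal (hm₂ : Differentiable ℝ m₂)
    (hm₃ : Differentiable ℝ m₃) (hα : Differentiable ℝ α)
    (h2 : ∀ θ, deriv m₂ θ = -(m₁ θ) * cos (α θ))
    (h3 : ∀ θ, deriv m₃ θ = -(m₁ θ) * sin (α θ)) (x : ℝ) :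
    HasDerivAt (fun θ => m₃ θ * cos (α θ) - m₂ θ * sin (α θ))
      (-deriv α x * (m₂ x * cos (α x) + m₃ x * sin (α x))) x := by
  refine (hasDerivAt_mul_cos_sub_mul_sin (hm₂ x).hasDerivAt
    (hm₃ x).hasDerivAt (hα x).hasDerivAt).congr_deriv ?_
  rw [h2, h3]
  ring

theorem hasDerivAt_deriv_of_principal (hm₂ : Differentiable ℝ m₂)
    (hm₃ : Differentiable ℝ m₃) (hf : Differentiable ℝ f) (hα : Differentiable ℝ α)
    (h1 : ∀ θ, deriv m₁ θ = m₂ θ * cos (α θ) + m₃ θ * sin (α θ) - f θ)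
    (h2 : ∀ θ, deriv m₂ θ = -(m₁ θ) * cos (α θ))
    (h3 : ∀ θ, deriv m₃ θ = -(m₁ θ) * sin (α θ)) (x : ℝ) :
    HasDerivAt (deriv m₁)
      (-m₁ x + deriv α x * (m₃ x * cos (α x) - m₂ x * sin (α x)) - deriv f x) x := by
  rw [funext h1]
  exact (hasDerivAt_mul_cos_add_mul_sin_of_principal hm₂ hm₃ hα h2 h3 x).sub (hf x).hasDerivAt

theorem hasDerivAt_deriv_deriv_of_principal (hm₁ : Differentiable ℝ m₁)
    (hm₂ : Differentiable ℝ m₂) (hm₃ : Differentiable ℝ m₃)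
    (hf : Differentiable ℝ f) (hf' : Differentiable ℝ (deriv f))
    (hα : Differentiable ℝ α) (hα' : Differentiable ℝ (deriv α))
    (h1 : ∀ θ, deriv m₁ θ = m₂ θ * cos (α θ) + m₃ θ * sin (α θ) - f θ)
    (h2 : ∀ θ, deriv m₂ θ = -(m₁ θ) * cos (α θ))
    (h3 : ∀ θ, deriv m₃ θ = -(m₁ θ) * sin (α θ)) (x : ℝ) :
    HasDerivAt (deriv (deriv m₁))
      (-deriv m₁ x + deriv (deriv α) x * (m₃ x * cos (α x) - m₂ x * sin (α x))
        - deriv α x ^ 2 * (deriv m₁ x + f x) - deriv (deriv f) x) x := by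
  rw [funext fun θ => (hasDerivAt_deriv_of_principal hm₂ hm₃ hf hα h1 h2 h3 θ).deriv]
  have hu := hasDerivAt_mul_cos_sub_mul_sin_of_principal hm₂ hm₃ hα h2 h3 x
  refine (((hm₁ x).hasDerivAt.neg.add ((hα' x).hasDerivAt.mul hu)).sub
    (hf' x).hasDerivAt).congr_deriv ?_
  rw [h1]
  ring

end PrincipalDarboux

/-- Principal-line case: the coefficients of the principal-line Darboux system
give a third-order ODE for `m₁` (paper's equation (19), with the indefinite
integrals evaluated as `-m₂` and `-m₃`). -/
theorem principal_third_order_ode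
    (m₁ m₂ m₃ f α : ℝ → ℝ)
    (hm₁ : Differentiable ℝ m₁) (hm₂ : Differentiable ℝ m₂)
    (hm₃ : Differentiable ℝ m₃)
    (hf : Differentiable ℝ f) (hf' : Differentiable ℝ (deriv f))
    (hα : Differentiable ℝ α) (hα' : Differentiable ℝ (deriv α))
    (h1 : ∀ θ, deriv m₁ θ = m₂ θ * Real.cos (α θ) + m₃ θ * Real.sin (α θ) - f θ)
    (h2 : ∀ θ, deriv m₂ θ = -(m₁ θ) * Real.cos (α θ))
    (h3 : ∀ θ, deriv m₃ θ = -(m₁ θ) * Real.sin (α θ)) :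
    Differentiable ℝ (deriv m₁) ∧ Differentiable ℝ (deriv (deriv m₁)) ∧
      ∀ θ, deriv (deriv (deriv m₁)) θ + deriv m₁ θ + deriv (deriv f) θ
          + (deriv α θ) ^ 2 * (deriv m₁ θ + f θ)
          - deriv (deriv α) θ * (m₃ θ * Real.cos (α θ) - m₂ θ * Real.sin (α θ))
          = 0 := by
  have second := hasDerivAt_deriv_of_principal hm₂ hm₃ hf hα h1 h2 h3
  have third := hasDerivAt_deriv_deriv_of_principal hm₁ hm₂ hm₃ hf hf' hα hα' h1 h2 h3
  refine ⟨fun θ => (second θ).differentiableAt, fun θ => (third θ).differentiableAt,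
    fun θ => ?_⟩
  rw [(third θ).deriv]
  ring
end

section
/- Let φ₀ be a real constant and let m₁, m₂, m₃, α : ℝ → ℝ satisfy the principal-line Darboux system with f ≡ 0, namely m₁' = m₂·cos α + m₃·sin α, m₂' = −m₁·cos α, m₃' = −m₁·sin α on ℝ, where m₁, m₂, m₃ are differentiable and α is differentiable with α'(θ) = φ₀ for all θ. Then m₁ is three times differentiable and satisfies m₁''' + (1 + φ₀²)·m₁' = 0 on ℝ. -/
/-!
Rotating the pair `(m₂, m₃)` by the angle `α` gives `F = m₂ cos α + m₃ sin α` and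
`G = m₃ cos α - m₂ sin α`. Since `cos² + sin² = 1` and `α' = φ₀`, the system becomes the
constant-coefficient system `m₁' = F`, `F' = -m₁ + φ₀ G`, `G' = -φ₀ F`, and differentiating
`F'` once more eliminates `G`: `m₁''' = F'' = -(1 + φ₀²) F`.
-/

open Real

section Rotation

variable {m₁ m₂ m₃ α : ℝ → ℝ} {a θ : ℝ}

theorem hasDerivAt_mul_cos_add_mul_sin_s12
    (hα : HasDerivAt α a θ) (h₂ : HasDerivAt m₂ (-m₁ θ * cos (α θ)) θ)
    (h₃ : HasDerivAt m₃ (-m₁ θ * sin (α θ)) θ) :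
    HasDerivAt (fun t => m₂ t * cos (α t) + m₃ t * sin (α t))
      (-m₁ θ + a * (m₃ θ * cos (α θ) - m₂ θ * sin (α θ))) θ := by
  refine ((h₂.mul hα.cos).add (h₃.mul hα.sin)).congr_deriv ?_
  linear_combination -m₁ θ * sin_sq_add_cos_sq (α θ)

theorem hasDerivAt_mul_cos_sub_mul_sin_s12
    (hα : HasDerivAt α a θ) (h₂ : HasDerivAt m₂ (-m₁ θ * cos (α θ)) θ)
    (h₃ : HasDerivAt m₃ (-m₁ θ * sin (α θ)) θ) :
    HasDerivAt (fun t => m₃ t * cos (α t) - m₂ t * sin (α t))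
      (-(a * (m₂ θ * cos (α θ) + m₃ θ * sin (α θ)))) θ := by
  refine ((h₃.mul hα.cos).sub (h₂.mul hα.sin)).congr_deriv ?_
  ring

end Rotation

theorem third_order_ode_of_hasDerivAt_system {u F G : ℝ → ℝ} {c : ℝ}
    (hu : ∀ θ, HasDerivAt u (F θ) θ) (hF : ∀ θ, HasDerivAt F (-u θ + c * G θ) θ)
    (hG : ∀ θ, HasDerivAt G (-(c * F θ)) θ) :
    Differentiable ℝ (deriv u) ∧ Differentiable ℝ (deriv (deriv u)) ∧
      ∀ θ, deriv (deriv (deriv u)) θ + (1 + c ^ 2) * deriv u θ = 0 := by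
  have hdu : deriv u = F := funext fun θ => (hu θ).deriv
  have hdF : deriv F = fun θ => -u θ + c * G θ := funext fun θ => (hF θ).deriv
  have hF'' : ∀ θ, HasDerivAt (fun θ => -u θ + c * G θ) (-F θ + c * -(c * F θ)) θ :=
    fun θ => (hu θ).neg.add ((hG θ).const_mul c)
  refine ⟨hdu ▸ fun θ => (hF θ).differentiableAt,
    hdu ▸ hdF ▸ fun θ => (hF'' θ).differentiableAt, fun θ => ?_⟩
  rw [hdu, hdF, (hF'' θ).deriv]
  ring

/-- Principal-line case with `f ≡ 0` and helix condition `α' = φ₀`: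
`m₁` satisfies `m₁''' + (1 + φ₀²) m₁' = 0`. -/
theorem principal_helix_third_order_ode
    (φ₀ : ℝ) (m₁ m₂ m₃ α : ℝ → ℝ)
    (hm₁ : Differentiable ℝ m₁) (hm₂ : Differentiable ℝ m₂)
    (hm₃ : Differentiable ℝ m₃)
    (hα : Differentiable ℝ α) (hα' : ∀ θ, deriv α θ = φ₀)
    (h1 : ∀ θ, deriv m₁ θ = m₂ θ * Real.cos (α θ) + m₃ θ * Real.sin (α θ))
    (h2 : ∀ θ, deriv m₂ θ = -(m₁ θ) * Real.cos (α θ))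
    (h3 : ∀ θ, deriv m₃ θ = -(m₁ θ) * Real.sin (α θ)) :
    Differentiable ℝ (deriv m₁) ∧ Differentiable ℝ (deriv (deriv m₁)) ∧
      ∀ θ, deriv (deriv (deriv m₁)) θ + (1 + φ₀ ^ 2) * deriv m₁ θ = 0 := by
  have hαd : ∀ θ, HasDerivAt α φ₀ θ := fun θ => hα' θ ▸ (hα θ).hasDerivAt
  have hm₂d : ∀ θ, HasDerivAt m₂ (-m₁ θ * cos (α θ)) θ := fun θ => h2 θ ▸ (hm₂ θ).hasDerivAt
  have hm₃d : ∀ θ, HasDerivAt m₃ (-m₁ θ * sin (α θ)) θ := fun θ => h3 θ ▸ (hm₃ θ).hasDerivAt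
  exact third_order_ode_of_hasDerivAt_system (fun θ => h1 θ ▸ (hm₁ θ).hasDerivAt)
    (fun θ => hasDerivAt_mul_cos_add_mul_sin_s12 (hαd θ) (hm₂d θ) (hm₃d θ))
    (fun θ => hasDerivAt_mul_cos_sub_mul_sin_s12 (hαd θ) (hm₂d θ) (hm₃d θ))
end

section
/- Let m₁, m₂, m₃, f, α : ℝ → ℝ satisfy the principal-line Darboux system m₁' = m₂·cos α + m₃·sin α − f, m₂' = −m₁·cos α, m₃' = −m₁·sin α on ℝ with m₂, m₃ differentiable, and suppose m₁(θ) = 0 for all θ. Then there exist real constants c₂, c₃ such that m₂ ≡ c₂, m₃ ≡ c₃, f(θ) = c₂·cos α(θ) + c₃·sin α(θ) for all θ, and the function m₁² + m₂² + m₃² is constant (equal to c₂² + c₃²). -/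
/-- Theorem 4 (first part) of the paper: in the principal-line Darboux system
with `m₁ ≡ 0`, the coefficients `m₂, m₃` are constant, `f = c₂ cos α + c₃ sin α`,
and the breadth is constant. -/
theorem principal_m1_eq_zero_constants
    (m₁ m₂ m₃ f α : ℝ → ℝ)
    (hm₂ : Differentiable ℝ m₂) (hm₃ : Differentiable ℝ m₃)
    (h1 : ∀ θ, deriv m₁ θ = m₂ θ * Real.cos (α θ) + m₃ θ * Real.sin (α θ) - f θ)
    (h2 : ∀ θ, deriv m₂ θ = -(m₁ θ) * Real.cos (α θ))
    (h3 : ∀ θ, deriv m₃ θ = -(m₁ θ) * Real.sin (α θ))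
    (hm₁ : ∀ θ, m₁ θ = 0) :
    ∃ c₂ c₃ : ℝ,
      (∀ θ, m₂ θ = c₂) ∧ (∀ θ, m₃ θ = c₃) ∧
      (∀ θ, f θ = c₂ * Real.cos (α θ) + c₃ * Real.sin (α θ)) ∧
      (∀ θ, (m₁ θ) ^ 2 + (m₂ θ) ^ 2 + (m₃ θ) ^ 2 = c₂ ^ 2 + c₃ ^ 2) := by
  have hm₁' : m₁ = fun _ => 0 := funext hm₁
  have hderiv₁ : ∀ θ, deriv m₁ θ = 0 := by
    intro θ; rw [hm₁']; simp
  have hc₂ : ∀ θ, m₂ θ = m₂ 0 := by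
    intro θ
    apply is_const_of_deriv_eq_zero hm₂
    intro x; rw [h2 x, hm₁ x]; ring
  have hc₃ : ∀ θ, m₃ θ = m₃ 0 := by
    intro θ
    apply is_const_of_deriv_eq_zero hm₃
    intro x; rw [h3 x, hm₁ x]; ring
  refine ⟨m₂ 0, m₃ 0, hc₂, hc₃, ?_, ?_⟩
  · intro θ
    have := h1 θ
    rw [hderiv₁ θ, hc₂ θ, hc₃ θ] at this
    linarith
  · intro θ
    rw [hm₁ θ, hc₂ θ, hc₃ θ]; ring
end

section
/- Let m₂, m₃, f, φ : ℝ → ℝ satisfy m₃ = f, m₂' = φ·m₃, and m₃' = −φ·m₂ on ℝ (the geodesic Darboux system m₁' = m₃ − f, m₂' = φ·m₃, m₃' = −m₁ − φ·m₂ with m₁ ≡ 0), where m₂, m₃ are differentiable and φ is differentiable with φ(θ) ≠ 0 for all θ. Then f is twice differentiable and satisfies f'' − (φ'/φ)·f' + φ²·f = 0 on ℝ. -/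
section RotationSystem

variable {x y φ : ℝ → ℝ}

theorem differentiable_deriv_of_deriv_eq_neg_mul (hx : Differentiable ℝ x)
    (hφ : Differentiable ℝ φ) (hy' : ∀ θ, deriv y θ = -φ θ * x θ) :
    Differentiable ℝ (deriv y) := by
  rw [funext hy']
  exact hφ.neg.mul hx

theorem deriv_deriv_eq_of_deriv_eq_neg_mul (hx : Differentiable ℝ x)
    (hφ : Differentiable ℝ φ) (hy' : ∀ θ, deriv y θ = -φ θ * x θ) (θ : ℝ) :
    deriv (deriv y) θ = -deriv φ θ * x θ - φ θ * deriv x θ := by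
  rw [funext hy', deriv_fun_mul (hφ θ).fun_neg (hx θ), deriv.fun_neg]
  ring

/-- Where `φ θ ≠ 0`, `x θ = -y' θ / φ θ` can be eliminated from `y'' = -φ' x - φ² y`. -/
theorem deriv_deriv_sub_add_eq_zero_of_rotation (hx : Differentiable ℝ x)
    (hφ : Differentiable ℝ φ) (hx' : ∀ θ, deriv x θ = φ θ * y θ)
    (hy' : ∀ θ, deriv y θ = -φ θ * x θ) (θ : ℝ) (hφθ : φ θ ≠ 0) :
    deriv (deriv y) θ - (deriv φ θ / φ θ) * deriv y θ + φ θ ^ 2 * y θ = 0 := by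
  rw [deriv_deriv_eq_of_deriv_eq_neg_mul hx hφ hy', hx', hy']
  field_simp
  ring

end RotationSystem

/-- Paper's equation (12): in the geodesic Darboux system with `m₁ ≡ 0`,
the function `f` satisfies `f'' - (φ'/φ) f' + φ² f = 0`. -/
theorem geodesic_m1_eq_zero_f_ode
    (m₂ m₃ f φ : ℝ → ℝ)
    (hm₂ : Differentiable ℝ m₂) (hm₃ : Differentiable ℝ m₃)
    (hφ : Differentiable ℝ φ) (hφ0 : ∀ θ, φ θ ≠ 0)
    (h1 : ∀ θ, m₃ θ = f θ)
    (h2 : ∀ θ, deriv m₂ θ = φ θ * m₃ θ)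
    (h3 : ∀ θ, deriv m₃ θ = -(φ θ) * m₂ θ) :
    Differentiable ℝ f ∧ Differentiable ℝ (deriv f) ∧
      ∀ θ, deriv (deriv f) θ - (deriv φ θ / φ θ) * deriv f θ
          + (φ θ) ^ 2 * f θ = 0 := by
  obtain rfl : m₃ = f := funext h1
  exact ⟨hm₃, differentiable_deriv_of_deriv_eq_neg_mul hm₂ hφ h3,
    fun θ => deriv_deriv_sub_add_eq_zero_of_rotation hm₂ hφ h2 h3 θ (hφ0 θ)⟩
end

section
/- Let ε ∈ {1, −1} and let m₂, m₃, f, φ : ℝ → ℝ satisfy ε·m₂ = f, m₂' = φ·m₃, and m₃' = −φ·m₂ on ℝ (the asymptotic Darboux system m₁' = ε·m₂ − f, m₂' = φ·m₃ − ε·m₁, m₃' = −φ·m₂ with m₁ ≡ 0), where m₂, m₃ are differentiable and φ is differentiable with φ(θ) ≠ 0 for all θ. Then f is twice differentiable and satisfies f'' − (φ'/φ)·f' + φ²·f = 0 on ℝ. -/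
/-!
With `m₁ ≡ 0` the system says `f = ε m₂`, and `(m₂, m₃)` is rotated with angular speed `φ`:
`m₂' = φ m₃`, `m₃' = -φ m₂`. Differentiating `m₂' = φ m₃` once more gives
`m₂'' = φ' m₃ - φ² m₂`, and eliminating `m₃ = m₂' / φ` yields the second order equation for `m₂`;
it passes to `f = ε m₂` by linearity.
-/

section RotationSystem

variable {g h φ : ℝ → ℝ}

theorem differentiable_deriv_of_deriv_eq_mul (hh : Differentiable ℝ h) (hφ : Differentiable ℝ φ)
    (hg' : ∀ θ, deriv g θ = φ θ * h θ) : Differentiable ℝ (deriv g) := by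
  rw [show deriv g = φ * h from funext hg']
  exact hφ.mul hh

theorem deriv_deriv_of_rotation (hh : Differentiable ℝ h) (hφ : Differentiable ℝ φ)
    (hg' : ∀ θ, deriv g θ = φ θ * h θ) (hh' : ∀ θ, deriv h θ = -φ θ * g θ) (θ : ℝ) :
    deriv (deriv g) θ = deriv φ θ * h θ - φ θ ^ 2 * g θ := by
  rw [show deriv g = fun θ => φ θ * h θ from funext hg', deriv_fun_mul (hφ θ) (hh θ), hh']
  ring

theorem deriv_deriv_sub_add_eq_zero_of_rotation_s16 (hh : Differentiable ℝ h)
    (hφ : Differentiable ℝ φ) (hφ0 : ∀ θ, φ θ ≠ 0)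
    (hg' : ∀ θ, deriv g θ = φ θ * h θ) (hh' : ∀ θ, deriv h θ = -φ θ * g θ) (θ : ℝ) :
    deriv (deriv g) θ - deriv φ θ / φ θ * deriv g θ + φ θ ^ 2 * g θ = 0 := by
  rw [deriv_deriv_of_rotation hh hφ hg' hh', hg']
  field_simp [hφ0 θ]
  ring

end RotationSystem

theorem asymptotic_m1_eq_zero_f_ode_general
    (ε : ℝ)
    (m₂ m₃ f φ : ℝ → ℝ)
    (hm₂ : Differentiable ℝ m₂) (hm₃ : Differentiable ℝ m₃)
    (hφ : Differentiable ℝ φ) (hφ0 : ∀ θ, φ θ ≠ 0)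
    (h1 : ∀ θ, ε * m₂ θ = f θ)
    (h2 : ∀ θ, deriv m₂ θ = φ θ * m₃ θ)
    (h3 : ∀ θ, deriv m₃ θ = -(φ θ) * m₂ θ) :
    Differentiable ℝ f ∧ Differentiable ℝ (deriv f) ∧
      ∀ θ, deriv (deriv f) θ - (deriv φ θ / φ θ) * deriv f θ
          + (φ θ) ^ 2 * f θ = 0 := by
  obtain rfl : f = fun θ => ε * m₂ θ := funext fun θ => (h1 θ).symm
  simp only [deriv_const_mul_field']
  refine ⟨hm₂.const_mul ε, (differentiable_deriv_of_deriv_eq_mul hm₃ hφ h2).const_mul ε,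
    fun θ => ?_⟩
  linear_combination ε * deriv_deriv_sub_add_eq_zero_of_rotation_s16 hm₃ hφ hφ0 h2 h3 θ

/-- Paper's equation (17): in the asymptotic Darboux system with `m₁ ≡ 0`,
the function `f` satisfies `f'' - (φ'/φ) f' + φ² f = 0`. -/
theorem asymptotic_m1_eq_zero_f_ode
    (ε : ℝ) (hε : ε = 1 ∨ ε = -1)
    (m₂ m₃ f φ : ℝ → ℝ)
    (hm₂ : Differentiable ℝ m₂) (hm₃ : Differentiable ℝ m₃)
    (hφ : Differentiable ℝ φ) (hφ0 : ∀ θ, φ θ ≠ 0)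
    (h1 : ∀ θ, ε * m₂ θ = f θ)
    (h2 : ∀ θ, deriv m₂ θ = φ θ * m₃ θ)
    (h3 : ∀ θ, deriv m₃ θ = -(φ θ) * m₂ θ) :
    Differentiable ℝ f ∧ Differentiable ℝ (deriv f) ∧
      ∀ θ, deriv (deriv f) θ - (deriv φ θ / φ θ) * deriv f θ
          + (φ θ) ^ 2 * f θ = 0 :=
  asymptotic_m1_eq_zero_f_ode_general ε m₂ m₃ f φ hm₂ hm₃ hφ hφ0 h1 h2 h3
end
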